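/- arXiv:2404.01054 — 3 statements merged into one kernel-verified Lean document; each statement's English description precedes it below -/
import Mathlib

section
/- Let Y_ref = (y_1, ..., y_N) be a list of N ≥ 1 responses, U : Y × Y → ℝ a utility function, and define the cost function C(y, y') = -U(y, y'). Let π̂ be the empirical probability mass function of Y_ref, i.e., π̂(y) = (1/N)·|{i : y_i = y}|, and for y ∈ Y_ref let π_y be the Dirac pmf at y. Then the set of elements y ∈ Y_ref maximizing the MBR objective (1/N)·Σ_{i=1}^{N} U(y, y_i) coincides with the set of elements y ∈ Y_ref minimizing the Wasserstein distance WD(π_y, π̂), where WD(P, Q) is the minimum over all couplings μ of (P, Q) of Σ_{i,j} μ(i,j)·C(y_i, y_j). -/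
/-- `Q` is a probability mass function on `Y`. -/
def IsPmf {Y : Type*} [Fintype Y] (Q : Y → ℝ) : Prop :=
  (∀ y, 0 ≤ Q y) ∧ ∑ y, Q y = 1

/-- `μ` is a coupling of the pair of pmfs `(P, Q)`. -/
def IsCoupling {Y : Type*} [Fintype Y] (P Q : Y → ℝ) (μ : Y × Y → ℝ) : Prop :=
  (∀ p, 0 ≤ μ p) ∧ (∀ y, ∑ y', μ (y, y') = P y) ∧ (∀ y', ∑ y, μ (y, y') = Q y')

/-- The Wasserstein distance between pmfs `P` and `Q` with cost `C`. -/
noncomputable def WD {Y : Type*} [Fintype Y] (C : Y → Y → ℝ) (P Q : Y → ℝ) : ℝ :=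
  sInf {c | ∃ μ : Y × Y → ℝ, IsCoupling P Q μ ∧ ∑ p : Y × Y, μ p * C p.1 p.2 = c}

/-- The Dirac pmf at `y`. -/
def dirac {Y : Type*} [DecidableEq Y] (y : Y) : Y → ℝ :=
  fun y' => if y' = y then 1 else 0

lemma wd_dirac_eq {Y : Type*} [Fintype Y] [DecidableEq Y]
    (C : Y → Y → ℝ) (emp : Y → ℝ) (hnn : ∀ y, 0 ≤ emp y) (hsum : ∑ y, emp y = 1)
    (y : Y) : WD C (dirac y) emp = ∑ b, emp b * C y b := by
  have hset : {c | ∃ μ : Y × Y → ℝ, IsCoupling (dirac y) emp μ ∧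
      ∑ p : Y × Y, μ p * C p.1 p.2 = c} = {∑ b, emp b * C y b} := by
    ext c
    simp only [Set.mem_setOf_eq, Set.mem_singleton_iff]
    constructor
    · rintro ⟨μ, ⟨hpos, hrow, hcol⟩, rfl⟩
      -- μ (a, b) = 0 for a ≠ y
      have hzero : ∀ a b, a ≠ y → μ (a, b) = 0 := by
        intro a b ha
        have h0 : ∑ y', μ (a, y') = 0 := by
          rw [hrow]; simp [dirac, ha]
        have := (Finset.sum_eq_zero_iff_of_nonneg (fun i _ => hpos (a, i))).mp h0
        exact this b (Finset.mem_univ b)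
      have hy : ∀ b, μ (y, b) = emp b := by
        intro b
        rw [← hcol b]
        rw [Finset.sum_eq_single y (fun a _ ha => hzero a b ha) (by simp)]
      rw [Fintype.sum_prod_type]
      rw [Finset.sum_eq_single y]
      · exact Finset.sum_congr rfl fun b _ => by rw [hy]
      · intro a _ ha
        exact Finset.sum_eq_zero fun b _ => by rw [hzero a b ha, zero_mul]
      · simp
    · rintro rfl
      refine ⟨fun p => dirac y p.1 * emp p.2, ⟨?_, ?_, ?_⟩, ?_⟩
      · rintro ⟨a, b⟩
        exact mul_nonneg (by by_cases h : a = y <;> simp [dirac, h]) (hnn b)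
      · intro a; simp only; rw [← Finset.mul_sum, hsum, mul_one]
      · intro b; simp only; rw [← Finset.sum_mul]
        have : ∑ a, dirac y a = 1 := by simp [dirac]
        rw [this, one_mul]
      · rw [Fintype.sum_prod_type]
        rw [Finset.sum_eq_single y]
        · exact Finset.sum_congr rfl fun b _ => by simp [dirac]
        · intro a _ ha; exact Finset.sum_eq_zero fun b _ => by simp [dirac, ha]
        · simp
  rw [WD, hset, csInf_singleton]

theorem mbr_argmax_eq_wd_argmin {Y : Type*} [Fintype Y] [DecidableEq Y] [Nonempty Y]
    (Yref : List Y) (hN : 1 ≤ Yref.length) (U : Y → Y → ℝ)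
    (C : Y → Y → ℝ) (hC : ∀ y y', C y y' = -U y y')
    (emp : Y → ℝ) (hemp : ∀ y, emp y = (Yref.count y : ℝ) / (Yref.length : ℝ))
    (mbr : Y → ℝ)
    (hmbr : ∀ y, mbr y = (1 / (Yref.length : ℝ)) * (Yref.map (fun y' => U y y')).sum) :
    {y | y ∈ Yref ∧ ∀ z ∈ Yref, mbr z ≤ mbr y}
      = {y | y ∈ Yref ∧ ∀ z ∈ Yref, WD C (dirac y) emp ≤ WD C (dirac z) emp} := by
  have hNpos : (0 : ℝ) < Yref.length := by exact_mod_cast hN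
  have hnn : ∀ y, 0 ≤ emp y := fun y => by
    rw [hemp]; positivity
  have hsum : ∑ y, emp y = 1 := by
    simp only [hemp, div_eq_mul_inv, ← Finset.sum_mul]
    rw [← Nat.cast_sum]
    have : ∑ y, Yref.count y = Yref.length := by
      rw [← List.sum_toFinset_count_eq_length]
      exact (Finset.sum_subset (Finset.subset_univ _)
        (fun x _ hx => List.count_eq_zero.mpr (by simpa using hx))).symm
    rw [this, mul_inv_cancel₀ (ne_of_gt hNpos)]
  -- key: WD C (dirac y) emp = - mbr y
  have key : ∀ y, WD C (dirac y) emp = - mbr y := by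
    intro y
    rw [wd_dirac_eq C emp hnn hsum, hmbr]
    have : ∑ b, emp b * C y b = -((Yref.length : ℝ)⁻¹ * ∑ b, (Yref.count b : ℝ) * U y b) := by
      simp only [hemp, hC, div_eq_mul_inv]
      rw [neg_mul_eq_mul_neg, ← Finset.sum_neg_distrib, Finset.mul_sum]
      exact Finset.sum_congr rfl fun b _ => by ring
    rw [this]
    have hmap : (Yref.map fun y' => U y y').sum = ∑ b, (Yref.count b : ℝ) * U y b := by
      rw [Finset.sum_list_map_count]
      rw [← Finset.sum_subset (Finset.subset_univ Yref.toFinset)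
        (fun x _ hx => by simp [List.count_eq_zero.mpr (by simpa using hx)])]
      exact Finset.sum_congr rfl fun b _ => by simp [nsmul_eq_mul]
    rw [hmap, one_div]
  ext y
  simp only [Set.mem_setOf_eq, key]
  constructor
  · rintro ⟨hy, h⟩; exact ⟨hy, fun z hz => neg_le_neg (h z hz)⟩
  · rintro ⟨hy, h⟩; exact ⟨hy, fun z hz => by have := h z hz; linarith⟩
end

section
/- Let Y be a nonempty finite type, Q a probability mass function on Y, U : Y × Y → ℝ a utility function, and C(y, y') = -U(y, y'). Then the set of y ∈ Y maximizing the expected utility Σ_{y' ∈ Y} Q(y')·U(y, y') coincides with the set of y ∈ Y minimizing the Wasserstein distance WD(π_y, Q), where π_y is the Dirac pmf at y. -/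
theorem expected_utility_argmax_eq_wd_argmin {Y : Type*} [Fintype Y] [DecidableEq Y] [Nonempty Y]
    (Q : Y → ℝ) (hQ : IsPmf Q) (U : Y → Y → ℝ)
    (C : Y → Y → ℝ) (hC : ∀ y y', C y y' = -U y y') :
    {y : Y | ∀ z : Y, ∑ y', Q y' * U z y' ≤ ∑ y', Q y' * U y y'}
      = {y : Y | ∀ z : Y, WD C (dirac y) Q ≤ WD C (dirac z) Q} := by
  have key : ∀ y : Y, WD C (dirac y) Q = ∑ y', Q y' * C y y' := by
    intro y
    have hset : {c | ∃ μ : Y × Y → ℝ, IsCoupling (dirac y) Q μ ∧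
        ∑ p : Y × Y, μ p * C p.1 p.2 = c} = {∑ y', Q y' * C y y'} := by
      ext c
      constructor
      · rintro ⟨μ, ⟨hnn, h1, h2⟩, rfl⟩
        -- μ vanishes off the row y
        have hzero : ∀ a b, a ≠ y → μ (a, b) = 0 := by
          intro a b hab
          have hrow : ∑ b', μ (a, b') = 0 := by
            rw [h1 a]; simp [dirac, hab]
          have := (Finset.sum_eq_zero_iff_of_nonneg (fun b' _ => hnn (a, b'))).mp hrow
          exact this b (Finset.mem_univ b)
        have hrowy : ∀ b, μ (y, b) = Q b := by
          intro b
          have := h2 b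
          rw [Finset.sum_eq_single y] at this
          · exact this
          · intro a _ ha; exact hzero a b ha
          · intro h; exact absurd (Finset.mem_univ y) h
        simp only [Set.mem_singleton_iff]
        rw [Fintype.sum_prod_type]
        rw [Finset.sum_eq_single y]
        · exact Finset.sum_congr rfl fun b _ => by rw [hrowy b]
        · intro a _ ha
          exact Finset.sum_eq_zero fun b _ => by rw [hzero a b ha, zero_mul]
        · intro h; exact absurd (Finset.mem_univ y) h
      · rintro rfl
        refine ⟨fun p => dirac y p.1 * Q p.2, ⟨?_, ?_, ?_⟩, ?_⟩
        · intro p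
          exact mul_nonneg (by unfold dirac; positivity) (hQ.1 p.2)
        · intro a
          simp only
          rw [← Finset.mul_sum, hQ.2, mul_one]
        · intro b
          simp only [← Finset.sum_mul]
          have : ∑ a, dirac y a = 1 := by simp [dirac]
          rw [this, one_mul]
        · rw [Fintype.sum_prod_type]
          rw [Finset.sum_eq_single y]
          · simp [dirac]
          · intro a _ ha
            exact Finset.sum_eq_zero fun b _ => by simp [dirac, ha]
          · intro h; exact absurd (Finset.mem_univ y) h
    rw [WD, hset, csInf_singleton]
  ext y
  simp only [Set.mem_setOf_eq, key]
  constructor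
  · intro h z
    have := h z
    simp only [hC]
    simp only [mul_neg, Finset.sum_neg_distrib]
    linarith
  · intro h z
    have := h z
    simp only [hC, mul_neg, Finset.sum_neg_distrib] at this
    linarith
end

section
/- Let Y be a nonempty finite type, R : Y → ℝ a reward function, and Q a probability mass function on Y with Q(y) > 0 for all y ∈ Y. Define the KL-regularized BoN objective F_β(y) = R(y) - β·D_KL(π_y ‖ Q) = R(y) + β·log Q(y), where π_y is the Dirac pmf at y. If y* ∈ Y is the unique maximizer of Q over Y (i.e., Q(y) < Q(y*) for all y ≠ y*), then there exists β₀ > 0 such that for all β ≥ β₀, y* is the unique maximizer of F_β over Y. In particular, KL-regularized BoN with sufficiently large β recovers maximum-a-posteriori (MAP) decoding, selecting the response with the highest model probability. -/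
/-- Kullback–Leibler divergence between pmfs `P` and `Q` on a finite type. -/
noncomputable def KLdiv {Y : Type*} [Fintype Y] (P Q : Y → ℝ) : ℝ :=
  ∑ y, if 0 < P y then P y * Real.log (P y / Q y) else 0

theorem kl_rbon_large_beta_recovers_map {Y : Type*} [Fintype Y] [DecidableEq Y] [Nonempty Y]
    (R : Y → ℝ) (Q : Y → ℝ) (hQ : IsPmf Q) (hQpos : ∀ y, 0 < Q y)
    (F : ℝ → Y → ℝ) (hF : ∀ β y, F β y = R y - β * KLdiv (dirac y) Q)
    (ystar : Y) (hstar : ∀ y : Y, y ≠ ystar → Q y < Q ystar) :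
    (∀ β y, F β y = R y + β * Real.log (Q y)) ∧
    ∃ β₀ : ℝ, 0 < β₀ ∧ ∀ β : ℝ, β₀ ≤ β →
      ∀ y : Y, y ≠ ystar → F β y < F β ystar := by
  have hKL : ∀ y, KLdiv (dirac y) Q = - Real.log (Q y) := by
    intro y
    unfold KLdiv dirac
    rw [Finset.sum_eq_single y]
    · simp [Real.log_div one_ne_zero (hQpos y).ne']
    · intro b _ hb; simp [hb]
    · intro h; simp at h
  have hF' : ∀ β y, F β y = R y + β * Real.log (Q y) := by
    intro β y; rw [hF, hKL]; ring
  refine ⟨hF', ?_⟩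
  set c : Y → ℝ := fun y =>
    if y = ystar then 0 else
      max 0 ((R y - R ystar) / (Real.log (Q ystar) - Real.log (Q y)))
  have hc0 : ∀ y, 0 ≤ c y := by
    intro y; by_cases h : y = ystar <;> simp [c, h]
  refine ⟨1 + ∑ y, c y, by positivity, ?_⟩
  intro β hβ y hy
  have hd : 0 < Real.log (Q ystar) - Real.log (Q y) := by
    have := Real.log_lt_log (hQpos y) (hstar y hy)
    linarith
  have hcy : (R y - R ystar) / (Real.log (Q ystar) - Real.log (Q y)) ≤ c y := by
    simp [c, hy]
  have hβc : (R y - R ystar) / (Real.log (Q ystar) - Real.log (Q y)) < β := by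
    have h1 : c y ≤ ∑ z, c z := Finset.single_le_sum (fun z _ => hc0 z) (Finset.mem_univ y)
    linarith
  have := (div_lt_iff₀ hd).mp hβc
  rw [hF', hF']
  nlinarith
end
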